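/- Let T be a tree with order p and diameter d ≥ 2, and let ε = ε(T). Suppose u_0, u_1, ..., u_{p-1} is a linear order of the vertices of T such that (a) u_0 = w and u_{p-1} ∈ N(w) when W(T) = {w}, and {u_0, u_{p-1}} = {w, w'} when W(T) = {w, w'}; and (b) for all 0 ≤ i < j ≤ p-1, d(u_i, u_j) ≥ Σ_{t=i}^{j-1}(L(u_t) + L(u_{t+1})) - (j-i)(d+ε) + (d+1). Then the mapping f defined by f(u_0) = 0 and f(u_{i+1}) = f(u_i) - L(u_{i+1}) - L(u_i) + (d+ε) for 0 ≤ i ≤ p-2 is a radio labeling of T whose span equals rn(T). -/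

import Mathlib

/-!
In a tree any two weight centers are adjacent and there are at most two of them, so
`d(u, v) ≤ L(u) + L(v) + 1 - ε` for all vertices `u, v`. Listing the vertices of a radio labeling
`g` by increasing label, consecutive labels therefore differ by at least
`d + ε - L(u_t) - L(u_{t+1})`, and summing these gaps gives
`span g ≥ (p - 1)(d + ε) - 2 L(T) + ε`. The labeling `f` has exactly these gaps along the given
order, so condition (b) is the radio condition for `f`, and by (a) its span attains the bound.
-/

namespace Radio

variable {V : Type*}

/-- The span of a labeling `f`: the maximum of `|f u - f v|` over all pairs of vertices. -/
def span [Fintype V] (f : V → ℕ) : ℕ :=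
  Finset.univ.sup fun p : V × V => ((f p.1 : ℤ) - (f p.2 : ℤ)).natAbs

/-- `f` is a radio labeling of `G`: `|f u - f v| ≥ diam G + 1 - d(u,v)` for all distinct `u, v`. -/
def IsRadioLabeling [Fintype V] (G : SimpleGraph V) (f : V → ℕ) : Prop :=
  ∀ u v : V, u ≠ v → G.diam + 1 ≤ G.dist u v + ((f u : ℤ) - (f v : ℤ)).natAbs

/-- The radio number of `G`: the minimum span of a radio labeling of `G`. -/
noncomputable def radioNumber [Fintype V] (G : SimpleGraph V) : ℕ :=
  sInf { n | ∃ f : V → ℕ, IsRadioLabeling G f ∧ span f = n }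

/-- The weight of `G` from a vertex `v`: `w_G(v) = ∑_u d(u, v)`. -/
noncomputable def weightFrom [Fintype V] (G : SimpleGraph V) (v : V) : ℕ :=
  ∑ u : V, G.dist u v

/-- The weight of `G`: the minimum of `w_G(v)` over all vertices `v`. -/
noncomputable def weight [Fintype V] (G : SimpleGraph V) : ℕ :=
  sInf (Set.range (weightFrom G))

/-- The set of weight centers of `G`: vertices minimizing `w_G(·)`. -/
def weightCenters [Fintype V] (G : SimpleGraph V) : Set V :=
  { v | ∀ x : V, weightFrom G v ≤ weightFrom G x }

/-- The level of a vertex `u`: `L(u) = min { d(u, x) : x ∈ W(G) }`. -/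
noncomputable def level [Fintype V] (G : SimpleGraph V) (u : V) : ℕ :=
  sInf (G.dist u '' weightCenters G)

/-- The total level of `G`: `L(G) = ∑_u L(u)`. -/
noncomputable def totalLevel [Fintype V] (G : SimpleGraph V) : ℕ :=
  ∑ u : V, level G u

/-- `ε(G) = 1` if `G` has exactly one weight center, and `0` otherwise
(for a tree the other case is exactly that of two adjacent weight centers). -/
noncomputable def epsilon [Fintype V] (G : SimpleGraph V) : ℕ :=
  if (weightCenters G).ncard = 1 then 1 else 0

end Radio

namespace SimpleGraph

variable {V : Type*} {G : SimpleGraph V}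

lemma Connected.dist_le_diam [Finite V] (hG : G.Connected) (u v : V) : G.dist u v ≤ G.diam := by
  have := hG.nonempty
  exact SimpleGraph.dist_le_diam (connected_iff_ediam_ne_top.1 hG)

lemma IsTree.mem_support_of_adj_of_dist_lt (hG : G.IsTree) {v a b : V} {p : G.Walk v b}
    (hp : p.IsPath) (hab : G.Adj a b) (h : G.dist v a < G.dist v b) : a ∈ p.support := by
  classical
  obtain ⟨q, hq, hql⟩ := (hG.connected v a).exists_path_of_dist
  refine hG.isAcyclic.mem_support_of_ne_mem_support_of_adj_of_isPath hp hq hab.symm fun hb => ?_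
  have := dist_le (q.takeUntil b hb)
  have := q.length_takeUntil_le_length hb
  omega

lemma IsTree.eq_of_adj_of_dist_lt (hG : G.IsTree) {v a b c : V} (hab : G.Adj a b)
    (hcb : G.Adj c b) (ha : G.dist v a < G.dist v b) (hc : G.dist v c < G.dist v b) : a = c := by
  obtain ⟨p, hp, -⟩ := (hG.connected v b).exists_path_of_dist
  rw [hG.isAcyclic.eq_penultimate_of_adj_end hp hab.symm
      (hG.mem_support_of_adj_of_dist_lt hp hab ha),
    hG.isAcyclic.eq_penultimate_of_adj_end hp hcb.symm
      (hG.mem_support_of_adj_of_dist_lt hp hcb hc)]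

lemma IsTree.dist_lt_dist_of_adj_of_adj (hG : G.IsTree) {v a b c : V} (hab : G.Adj a b)
    (hbc : G.Adj b c) (hac : a ≠ c) (h : G.dist v a < G.dist v b) :
    G.dist v b < G.dist v c := by
  rcases hG.dist_eq_dist_add_one_of_adj v hbc with hb | hc
  · exact absurd (hG.eq_of_adj_of_dist_lt hab hbc.symm h (by omega)) hac
  · omega

lemma IsTree.dist_penultimate_lt_of_dist_lt_dist_snd (hG : G.IsTree) {a c v : V}
    {p : G.Walk a c} (hp : p.IsPath) (h : G.dist v a < G.dist v p.snd) :
    G.dist v p.penultimate < G.dist v c := by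
  induction p with
  | nil => simp at h
  | cons hab q ih =>
    cases q with
    | nil => simpa using h
    | cons hbc r =>
      rw [Walk.cons_isPath_iff] at hp
      rw [Walk.penultimate_cons_cons]
      refine ih hp.1 ?_
      simp only [Walk.snd_cons] at h ⊢
      refine hG.dist_lt_dist_of_adj_of_adj hab hbc (fun hac => hp.2 ?_) h
      simp [hac]

end SimpleGraph

namespace Radio

open SimpleGraph Finset

variable {V : Type*} [Fintype V] {G : SimpleGraph V}

lemma card_le_two_mul_card_closer (hT : G.IsTree) {a b : V} (ha : a ∈ weightCenters G)
    (hab : G.Adj a b) : Fintype.card V ≤ 2 * #{v | G.dist v a < G.dist v b} := by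
  classical
  have hpoint : ∀ v, G.dist v a + (if G.dist v a < G.dist v b then 1 else 0) =
      G.dist v b + (if G.dist v b < G.dist v a then 1 else 0) := fun v => by
    rcases hT.dist_eq_dist_add_one_of_adj v hab with h | h <;> split_ifs <;> omega
  have hsum : weightFrom G a + #{v | G.dist v a < G.dist v b} =
      weightFrom G b + #{v | G.dist v b < G.dist v a} := by
    simp only [weightFrom, card_filter, ← sum_add_distrib, hpoint]
  have hpart : #{v | G.dist v a < G.dist v b} + #{v | G.dist v b < G.dist v a} =
      Fintype.card V := by
    rw [← card_union_of_disjoint (disjoint_filter.2 fun v _ h => h.asymm), ← filter_or,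
      filter_true_of_mem fun v _ => (hT.dist_ne_of_adj v hab).lt_or_gt, card_univ]
  have := ha b
  omega

/- If a path `w, b, …, z, w'` of length at least two joined two weight centers, the branches at
`w` (away from `b`) and at `w'` (away from `z`) would each contain at least half of the vertices,
although they are disjoint and both miss `b`. -/
theorem adj_of_mem_weightCenters (hT : G.IsTree) {w w' : V} (hw : w ∈ weightCenters G)
    (hw' : w' ∈ weightCenters G) (hne : w ≠ w') : G.Adj w w' := by
  classical
  obtain ⟨p, hp, -⟩ := (hT.connected w w').exists_path_of_dist
  cases p with
  | nil => exact absurd rfl hne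
  | @cons _ b _ hwb q =>
    by_contra hadj
    have hq : ¬q.Nil := fun h => hadj (h.eq ▸ hwb)
    rw [Walk.cons_isPath_iff] at hp
    have hwq : w ≠ q.snd := fun h => hp.2 (h ▸ q.getVert_mem_support 1)
    set z := q.penultimate
    have hA := card_le_two_mul_card_closer hT hw hwb
    have hC : Fintype.card V ≤ 2 * #{v | G.dist v w' < G.dist v z} :=
      card_le_two_mul_card_closer hT hw' (Walk.adj_penultimate hq).symm
    have hAB : insert b ({v | G.dist v w < G.dist v b} : Finset V) ⊆
        ({v | G.dist v z < G.dist v w'} : Finset V) := by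
      intro v hv
      simp only [mem_insert, mem_filter, mem_univ, true_and] at hv ⊢
      refine hT.dist_penultimate_lt_of_dist_lt_dist_snd hp.1 ?_
      rcases hv with rfl | hv
      · rw [dist_self]
        exact hT.connected.pos_dist_of_ne (Walk.adj_snd hq).ne
      · exact hT.dist_lt_dist_of_adj_of_adj hwb (Walk.adj_snd hq) hwq hv
    have hb : b ∉ ({v | G.dist v w < G.dist v b} : Finset V) := by simp
    have hBC : #{v | G.dist v z < G.dist v w'} + #{v | G.dist v w' < G.dist v z} ≤
        Fintype.card V := by
      rw [← card_union_of_disjoint (disjoint_filter.2 fun v _ h => h.asymm)]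
      exact card_le_univ _
    have := card_le_card hAB
    rw [card_insert_of_notMem hb] at this
    omega

lemma weightCenters_nonempty [Nonempty V] (G : SimpleGraph V) : (weightCenters G).Nonempty := by
  obtain ⟨w, -, hw⟩ := exists_min_image univ (weightFrom G) univ_nonempty
  exact ⟨w, fun x => hw x (mem_univ x)⟩

theorem weightCenters_eq_singleton_or_pair (hT : G.IsTree) :
    (∃ w, weightCenters G = {w}) ∨ ∃ w w', G.Adj w w' ∧ weightCenters G = {w, w'} := by
  classical
  have := hT.connected.nonempty
  obtain ⟨w, hw⟩ := weightCenters_nonempty G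
  by_cases hall : ∀ x ∈ weightCenters G, x = w
  · exact .inl ⟨w, Set.eq_singleton_iff_unique_mem.2 ⟨hw, hall⟩⟩
  push Not at hall
  obtain ⟨w', hw', hne⟩ := hall
  have hadj := adj_of_mem_weightCenters hT hw hw' hne.symm
  refine .inr ⟨w, w', hadj, Set.Subset.antisymm (fun x hx => ?_) ?_⟩
  · by_contra hx'
    simp only [Set.mem_insert_iff, Set.mem_singleton_iff, not_or] at hx'
    refine hT.isAcyclic.cliqueFree le_rfl {w, w', x} (is3Clique_triple_iff.2 ⟨hadj, ?_, ?_⟩)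
    · exact adj_of_mem_weightCenters hT hw hx (Ne.symm hx'.1)
    · exact adj_of_mem_weightCenters hT hw' hx (Ne.symm hx'.2)
  · rintro x (rfl | rfl) <;> assumption

lemma exists_mem_weightCenters_dist_eq_level [Nonempty V] (G : SimpleGraph V) (u : V) :
    ∃ x ∈ weightCenters G, G.dist u x = level G u :=
  Nat.sInf_mem ((weightCenters_nonempty G).image _)

lemma level_eq_zero_of_mem_weightCenters {x : V} (hx : x ∈ weightCenters G) : level G x = 0 :=
  Nat.sInf_eq_zero.2 (.inl ⟨x, hx, dist_self⟩)

lemma level_eq_dist_of_weightCenters_eq_singleton {w : V} (h : weightCenters G = {w}) (u : V) :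
    level G u = G.dist u w := by
  rw [level, h, Set.image_singleton, csInf_singleton]

lemma epsilon_le_one : epsilon G ≤ 1 := by
  unfold epsilon
  split_ifs <;> simp

lemma epsilon_eq_one_iff : epsilon G = 1 ↔ ∃ w, weightCenters G = {w} := by
  rw [← Set.ncard_eq_one, epsilon]
  split_ifs <;> simp [*]

lemma epsilon_eq_zero_of_mem_of_mem {x y : V} (hx : x ∈ weightCenters G)
    (hy : y ∈ weightCenters G) (hxy : x ≠ y) : epsilon G = 0 := by
  have : epsilon G ≠ 1 := fun h => by
    obtain ⟨w, hw⟩ := epsilon_eq_one_iff.1 h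
    rw [hw] at hx hy
    exact hxy (hx.trans hy.symm)
  have := epsilon_le_one (G := G)
  omega

theorem dist_add_epsilon_le (hT : G.IsTree) (u v : V) :
    G.dist u v + epsilon G ≤ level G u + level G v + 1 := by
  have := hT.connected.nonempty
  obtain ⟨x, hx, hux⟩ := exists_mem_weightCenters_dist_eq_level G u
  obtain ⟨y, hy, hvy⟩ := exists_mem_weightCenters_dist_eq_level G v
  have hxy : G.dist x y + epsilon G ≤ 1 := by
    rcases eq_or_ne x y with rfl | hne
    · simpa using epsilon_le_one
    · rw [dist_eq_one_iff_adj.2 (adj_of_mem_weightCenters hT hx hy hne),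
        epsilon_eq_zero_of_mem_of_mem hx hy hne]
  have h₁ : G.dist u v ≤ G.dist u x + G.dist x v := hT.connected.dist_triangle
  have h₂ : G.dist x v ≤ G.dist x y + G.dist y v := hT.connected.dist_triangle
  rw [dist_comm (u := y)] at h₂
  omega

theorem epsilon_le_level_add_level (hG : G.Connected) {x y : V} (hxy : x ≠ y) :
    epsilon G ≤ level G x + level G y := by
  by_contra! h
  have hε : epsilon G = 1 := le_antisymm epsilon_le_one (by omega)
  obtain ⟨w, hw⟩ := epsilon_eq_one_iff.1 hε
  rw [level_eq_dist_of_weightCenters_eq_singleton hw,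
    level_eq_dist_of_weightCenters_eq_singleton hw, hε] at h
  have hx : x = w := hG.dist_eq_zero_iff.1 (by omega)
  have hy : y = w := hG.dist_eq_zero_iff.1 (by omega)
  exact hxy (hx.trans hy.symm)

theorem level_add_level_eq_epsilon (hT : G.IsTree) {a b : V}
    (h₁ : ∀ w, weightCenters G = {w} → a = w ∧ G.Adj w b)
    (h₂ : ∀ w w', w ≠ w' → weightCenters G = {w, w'} → ({a, b} : Set V) = {w, w'}) :
    level G a + level G b = epsilon G := by
  rcases weightCenters_eq_singleton_or_pair hT with ⟨w, hw⟩ | ⟨w, w', hadj, hw⟩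
  · obtain ⟨rfl, hab⟩ := h₁ w hw
    rw [level_eq_dist_of_weightCenters_eq_singleton hw,
      level_eq_dist_of_weightCenters_eq_singleton hw, dist_self, dist_comm,
      dist_eq_one_iff_adj.2 hab, epsilon_eq_one_iff.2 ⟨a, hw⟩]
  · have hab : ({a, b} : Set V) = weightCenters G := (h₂ w w' hadj.ne hw).trans hw.symm
    rw [level_eq_zero_of_mem_weightCenters (hab ▸ Set.mem_insert a {b}),
      level_eq_zero_of_mem_weightCenters (hab ▸ Set.mem_insert_of_mem a rfl),
      epsilon_eq_zero_of_mem_of_mem (hw ▸ Set.mem_insert w {w'})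
        (hw ▸ Set.mem_insert_of_mem w rfl) hadj.ne]

lemma natAbs_sub_le_span (f : V → ℕ) (a b : V) : ((f a : ℤ) - f b).natAbs ≤ span f :=
  le_sup (f := fun p : V × V => ((f p.1 : ℤ) - f p.2).natAbs) (mem_univ (a, b))

lemma span_eq_of_forall_le {f : V → ℕ} {a b : V} (ha : f a = 0) (hb : ∀ v, f v ≤ f b) :
    span f = f b := by
  refine le_antisymm (Finset.sup_le fun p _ => ?_) (by simpa [ha] using natAbs_sub_le_span f b a)
  have := hb p.1
  have := hb p.2
  omega

lemma radioNumber_eq_span {f : V → ℕ} (hf : IsRadioLabeling G f)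
    (hmin : ∀ g, IsRadioLabeling G g → span f ≤ span g) : radioNumber G = span f :=
  le_antisymm (Nat.sInf_le ⟨f, hf, rfl⟩)
    (le_csInf ⟨_, f, hf, rfl⟩ fun _ ⟨g, hg, hgn⟩ => hgn ▸ hmin g hg)

lemma IsRadioLabeling.injective (hG : G.Connected) {f : V → ℕ} (hf : IsRadioLabeling G f) :
    Function.Injective f := by
  intro a b hab
  by_contra hne
  have h₁ := hf a b hne
  have h₂ := hG.dist_le_diam a b
  simp only [hab, sub_self, Int.natAbs_zero, add_zero] at h₁
  omega

def IsVertexOrdering (u : ℕ → V) : Prop :=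
  ∀ v : V, ∃! i : ℕ, i < Fintype.card V ∧ u i = v

namespace IsVertexOrdering

variable {u : ℕ → V}

lemma sum_range_card (hu : IsVertexOrdering u) {M : Type*} [AddCommMonoid M] (F : V → M) :
    ∑ i ∈ range (Fintype.card V), F (u i) = ∑ v, F v := by
  refine sum_nbij u (fun _ _ => mem_univ _) (fun i hi j hj hij => ?_) (fun v _ => ?_)
    fun _ _ => rfl
  · exact (hu (u i)).unique ⟨mem_range.1 hi, rfl⟩ ⟨mem_range.1 hj, hij.symm⟩
  · obtain ⟨i, ⟨hi, rfl⟩, -⟩ := hu v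
    exact ⟨i, mem_range.2 hi, rfl⟩

lemma sum_range_add_succ [Nonempty V] (hu : IsVertexOrdering u) (F : V → ℤ) :
    ∑ t ∈ range (Fintype.card V - 1), (F (u t) + F (u (t + 1))) =
      2 * ∑ v, F v - F (u 0) - F (u (Fintype.card V - 1)) := by
  obtain ⟨n, hn⟩ : ∃ n, Fintype.card V = n + 1 :=
    Nat.exists_eq_add_one_of_ne_zero Fintype.card_ne_zero
  have h := hu.sum_range_card F
  rw [hn] at h ⊢
  rw [Nat.add_sub_cancel, sum_add_distrib]
  linarith [sum_range_succ (fun i => F (u i)) n, sum_range_succ' (fun i => F (u i)) n]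

lemma isRadioLabeling (hu : IsVertexOrdering u) {f : V → ℕ}
    (h : ∀ i j, i < j → j ≤ Fintype.card V - 1 →
      (G.diam : ℤ) + 1 ≤ G.dist (u i) (u j) + ((f (u j) : ℤ) - f (u i))) :
    IsRadioLabeling G f := by
  intro a b hab
  obtain ⟨i, ⟨hi, rfl⟩, -⟩ := hu a
  obtain ⟨j, ⟨hj, rfl⟩, -⟩ := hu b
  rcases lt_trichotomy i j with hij | rfl | hij
  · have := h i j hij (by omega)
    omega
  · exact absurd rfl hab
  · have := h j i hij (by omega)
    rw [dist_comm] at this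
    omega

lemma span_eq_of_sub_eq_sum (hu : IsVertexOrdering u) {f : V → ℕ} {δ : ℕ → ℤ}
    (h0 : f (u 0) = 0) (hδ : ∀ t, t + 1 ≤ Fintype.card V - 1 → 0 ≤ δ t)
    (hdiff : ∀ i, i ≤ Fintype.card V - 1 → (f (u (Fintype.card V - 1)) : ℤ) - f (u i) =
      ∑ t ∈ Ico i (Fintype.card V - 1), δ t) :
    span f = f (u (Fintype.card V - 1)) :=
  span_eq_of_forall_le h0 fun v => by
    obtain ⟨i, ⟨hi, rfl⟩, -⟩ := hu v
    have := hdiff i (by omega) ▸ sum_nonneg fun t ht => hδ t (by rw [mem_Ico] at ht; omega)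
    omega

end IsVertexOrdering

lemma exists_isVertexOrdering_strictMono [Nonempty V] {g : V → ℕ} (hg : Function.Injective g) :
    ∃ u, IsVertexOrdering u ∧ ∀ i j, i < j → j < Fintype.card V → g (u i) < g (u j) := by
  let : LinearOrder V := LinearOrder.lift' g hg
  let e := monoEquivOfFin V rfl
  refine ⟨fun n => if h : n < Fintype.card V then e ⟨n, h⟩ else e ⟨0, Fintype.card_pos⟩,
    fun v => ⟨e.symm v, ⟨(e.symm v).2, by simp⟩, ?_⟩, fun i j hij hj => ?_⟩
  · rintro j ⟨hj, rfl⟩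
    simp [hj]
  · simp only [hj, hij.trans hj, dif_pos]
    exact e.strictMono (show (⟨i, _⟩ : Fin _) < ⟨j, hj⟩ from hij)

lemma sub_eq_sum_Ico_of_forall_succ_eq {M : Type*} [AddCommGroup M] {a δ : ℕ → M} {n : ℕ}
    (h : ∀ t, t + 1 ≤ n → a (t + 1) = a t + δ t) {i j : ℕ} (hij : i ≤ j)
    (hjn : j ≤ n) :
    a j - a i = ∑ t ∈ Ico i j, δ t := by
  rw [← sum_Ico_sub a hij]
  exact sum_congr rfl fun t ht => by rw [h t (by rw [mem_Ico] at ht; omega), add_sub_cancel_left]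

noncomputable def orderGap (G : SimpleGraph V) (u : ℕ → V) (t : ℕ) : ℤ :=
  G.diam + epsilon G - (level G (u t) + level G (u (t + 1)))

noncomputable def radioLowerBound (G : SimpleGraph V) : ℤ :=
  ((Fintype.card V : ℤ) - 1) * (G.diam + epsilon G) - 2 * totalLevel G + epsilon G

lemma orderGap_le_sub (hT : G.IsTree) {g : V → ℕ} (hg : IsRadioLabeling G g) {u : ℕ → V}
    {t : ℕ} (hlt : g (u t) < g (u (t + 1))) :
    orderGap G u t ≤ (g (u (t + 1)) : ℤ) - g (u t) := by
  have h₁ := hg (u (t + 1)) (u t) fun h => hlt.ne' (congrArg g h)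
  have h₂ := dist_add_epsilon_le hT (u (t + 1)) (u t)
  rw [orderGap]
  omega

lemma sum_Ico_orderGap (u : ℕ → V) {i j : ℕ} (hij : i ≤ j) :
    ∑ t ∈ Ico i j, orderGap G u t = ((j : ℤ) - i) * (G.diam + epsilon G) -
      ∑ t ∈ Ico i j, ((level G (u t) : ℤ) + level G (u (t + 1))) := by
  simp only [orderGap]
  rw [sum_sub_distrib, sum_const, Nat.card_Ico, nsmul_eq_mul, Nat.cast_sub hij]

lemma IsVertexOrdering.sum_range_orderGap [Nonempty V] {u : ℕ → V} (hu : IsVertexOrdering u) :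
    ∑ t ∈ range (Fintype.card V - 1), orderGap G u t =
      radioLowerBound G - epsilon G + level G (u 0) + level G (u (Fintype.card V - 1)) := by
  rw [range_eq_Ico, sum_Ico_orderGap u (Nat.zero_le _), ← range_eq_Ico,
    hu.sum_range_add_succ fun v => (level G v : ℤ), Nat.cast_pred Fintype.card_pos,
    radioLowerBound, totalLevel]
  push_cast
  ring

theorem radioLowerBound_le_span [Nontrivial V] (hT : G.IsTree) {g : V → ℕ}
    (hg : IsRadioLabeling G g) : radioLowerBound G ≤ span g := by
  obtain ⟨y, hy, hmono⟩ := exists_isVertexOrdering_strictMono (hg.injective hT.connected)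
  have hp : 1 < Fintype.card V := Fintype.one_lt_card
  have hends := epsilon_le_level_add_level hT.connected
    fun h => (hmono 0 (Fintype.card V - 1) (by omega) (by omega)).ne (congrArg g h)
  calc radioLowerBound G
      ≤ ∑ t ∈ range (Fintype.card V - 1), orderGap G y t := by
        rw [hy.sum_range_orderGap]
        omega
    _ ≤ ∑ t ∈ range (Fintype.card V - 1), ((g (y (t + 1)) : ℤ) - g (y t)) :=
        sum_le_sum fun t ht =>
          orderGap_le_sub hT hg (hmono t (t + 1) (lt_add_one t) (by rw [mem_range] at ht; omega))
    _ = (g (y (Fintype.card V - 1)) : ℤ) - g (y 0) := sum_range_sub (fun t => (g (y t) : ℤ)) _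
    _ ≤ span g := Int.le_natAbs.trans (by exact_mod_cast natAbs_sub_le_span g _ _)

/-- Given a linear order of the vertices of a tree `T` (diameter `d ≥ 2`)
satisfying conditions (a) and (b), the labeling `f` defined by `f(u 0) = 0` and
`f(u (i+1)) = f(u i) - L(u (i+1)) - L(u i) + (d + ε)` is a radio labeling of `T`
whose span equals `rn(T)` (i.e. it is optimal). -/
theorem isRadioLabeling_of_order {V : Type*} [Fintype V]
    (G : SimpleGraph V) (hT : G.IsTree) (hd : 2 ≤ G.diam)
    (u : ℕ → V)
    (horder : ∀ v : V, ∃! i : ℕ, i < Fintype.card V ∧ u i = v)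
    -- (a), one weight center case
    (ha1 : ∀ w : V, weightCenters G = {w} →
      u 0 = w ∧ G.Adj w (u (Fintype.card V - 1)))
    -- (a), two weight centers case
    (ha2 : ∀ w w' : V, w ≠ w' → weightCenters G = {w, w'} →
      ({u 0, u (Fintype.card V - 1)} : Set V) = {w, w'})
    -- (b)
    (hb : ∀ i j : ℕ, i < j → j ≤ Fintype.card V - 1 →
      (∑ t ∈ Finset.Ico i j, ((level G (u t) : ℤ) + (level G (u (t + 1)) : ℤ)))
          - ((j : ℤ) - (i : ℤ)) * ((G.diam : ℤ) + (epsilon G : ℤ)) + ((G.diam : ℤ) + 1)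
        ≤ (G.dist (u i) (u j) : ℤ))
    -- the labeling defined by the recursion (6)-(7)
    (f : V → ℕ)
    (hf0 : f (u 0) = 0)
    (hf : ∀ i : ℕ, i ≤ Fintype.card V - 2 →
      (f (u (i + 1)) : ℤ) =
        (f (u i) : ℤ) - (level G (u (i + 1)) : ℤ) - (level G (u i) : ℤ)
          + ((G.diam : ℤ) + (epsilon G : ℤ))) :
    IsRadioLabeling G f ∧ span f = radioNumber G := by
  have : Nontrivial V := nontrivial_of_diam_ne_zero (by omega : G.diam ≠ 0)
  have hu : IsVertexOrdering u := horder
  have hdiff : ∀ i j, i ≤ j → j ≤ Fintype.card V - 1 →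
      (f (u j) : ℤ) - f (u i) = ∑ t ∈ Ico i j, orderGap G u t :=
    fun i j => sub_eq_sum_Ico_of_forall_succ_eq (a := fun t => (f (u t) : ℤ)) fun t ht => by
      rw [hf t (by omega), orderGap]
      ring
  have hgap : ∀ i j, i < j → j ≤ Fintype.card V - 1 →
      (G.diam : ℤ) + 1 ≤ G.dist (u i) (u j) + ∑ t ∈ Ico i j, orderGap G u t :=
    fun i j hij hj => by linarith [hb i j hij hj, sum_Ico_orderGap (G := G) u hij.le]
  have hpos : ∀ t, t + 1 ≤ Fintype.card V - 1 → 0 ≤ orderGap G u t := fun t ht => by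
    have := hgap t (t + 1) (lt_add_one t) ht
    rw [Nat.Ico_succ_singleton, sum_singleton] at this
    linarith [hT.connected.dist_le_diam (u t) (u (t + 1))]
  have hspan : (span f : ℤ) = radioLowerBound G := by
    have hends : (level G (u 0) : ℤ) + level G (u (Fintype.card V - 1)) = epsilon G := by
      exact_mod_cast level_add_level_eq_epsilon hT ha1 ha2
    have hsum := hdiff 0 (Fintype.card V - 1) (Nat.zero_le _) le_rfl
    rw [← range_eq_Ico, hu.sum_range_orderGap, hf0, Nat.cast_zero] at hsum
    rw [hu.span_eq_of_sub_eq_sum hf0 hpos fun i hi => hdiff i _ hi le_rfl]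
    linarith
  have radio : IsRadioLabeling G f :=
    hu.isRadioLabeling fun i j hij hj => hdiff i j hij.le hj ▸ hgap i j hij hj
  refine ⟨radio, (radioNumber_eq_span radio fun g hg => ?_).symm⟩
  exact_mod_cast hspan ▸ radioLowerBound_le_span hT hg

end Radio
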